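/- Let ρ : ℝ → ℝ be globally Lipschitz continuous but not affine-linear, let S = (N_0, ..., N_{L-1}, 1) be a network architecture with L ≥ 2, N_0 = d, and N_1 ≥ 3, and let Ω ⊆ ℝ^d be bounded with nonempty interior. Then the realization map R_ρ^Ω, from the finite-dimensional normed space of neural networks with architecture S (with norm ‖Φ‖_total) onto its range inside C(Ω) with the sup-norm topology, is not a quotient map. -/

import Mathlib

open scoped BigOperators ENNReal NNReal Pointwise
open Filter MeasureTheory Topology

abbrev NNLayer (N : ℕ → ℕ) (ℓ : ℕ) : Type :=
  (Fin (N (ℓ + 1)) → Fin (N ℓ) → ℝ) × (Fin (N (ℓ + 1)) → ℝ)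

abbrev NNParams (L : ℕ) (N : ℕ → ℕ) : Type :=
  (ℓ : Fin L) → NNLayer N ℓ.val

noncomputable def nnAffine {N : ℕ → ℕ} {ℓ : ℕ} (W : NNLayer N ℓ) (x : Fin (N ℓ) → ℝ) :
    Fin (N (ℓ + 1)) → ℝ :=
  fun i => (∑ j, W.1 i j * x j) + W.2 i

noncomputable def nnHidden (ρ : ℝ → ℝ) :
    (L : ℕ) → (N : ℕ → ℕ) → NNParams L N → (Fin (N 0) → ℝ) → Fin (N L) → ℝ
  | 0, _, _, x => x
  | L + 1, N, Φ, x =>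
      nnHidden ρ L (fun k => N (k + 1))
        (fun ℓ => Φ ⟨ℓ.val + 1, Nat.succ_lt_succ ℓ.isLt⟩)
        (fun i => ρ (nnAffine (Φ ⟨0, Nat.succ_pos L⟩) x i))

noncomputable def nnRealization (ρ : ℝ → ℝ) :
    (L : ℕ) → (N : ℕ → ℕ) → NNParams L N → (Fin (N 0) → ℝ) → Fin (N L) → ℝ
  | 0, _, _, x => x
  | L + 1, N, Φ, x =>
      nnAffine (Φ ⟨L, Nat.lt_succ_self L⟩)
        (nnHidden ρ L N (fun ℓ => Φ ⟨ℓ.val, Nat.lt_succ_of_lt ℓ.isLt⟩) x)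

noncomputable def nnRealizationScalar (ρ : ℝ → ℝ) (L : ℕ) (N : ℕ → ℕ) (h : N L = 1)
    (Φ : NNParams L N) (x : Fin (N 0) → ℝ) : ℝ :=
  nnRealization ρ L N Φ x ⟨0, by rw [h]; exact Nat.one_pos⟩

noncomputable def nnScalingNorm {L : ℕ} {N : ℕ → ℕ} (Φ : NNParams L N) : ℝ :=
  ⨆ ℓ : Fin L, ‖(Φ ℓ).1‖

noncomputable def nnTotalNorm {L : ℕ} {N : ℕ → ℕ} (Φ : NNParams L N) : ℝ :=
  nnScalingNorm Φ + ⨆ ℓ : Fin L, ‖(Φ ℓ).2‖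

/-!
The difference `t ↦ ρ (t + δ) - ρ t` is bounded (`ρ` is Lipschitz) and, for a suitable `δ`,
non-constant (`ρ` is not affine). Pushed through the remaining layers by affine maps chosen so
that two of its values stay distinct, it gives a bounded non-constant profile `h` such that every
ridge function `x ↦ ε * h (K * x j₀ + b)` is a realization. With `ε → 0` and `ε * K → ∞` these
realizations tend to `0` uniformly while their Lipschitz constants blow up. Networks with bounded
weights have uniformly Lipschitz realizations, so a convergent sequence of parameters realizes only
finitely many members of the sequence; hence the set of parameters realizing one of them is
closed, although its image accumulates at the zero function outside it.
-/

open Matrix BoundedContinuousFunction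

theorem nnRealization_consNet (ρ : ℝ → ℝ) {L : ℕ} {N : ℕ → ℕ} (W : NNLayer N 0)
    (Ψ : NNParams (L + 1) (fun k => N (k + 1))) (x : Fin (N 0) → ℝ) :
    nnRealization ρ (L + 2) N (Fin.cons W Ψ) x =
      nnRealization ρ (L + 1) (fun k => N (k + 1)) Ψ (fun i => ρ (nnAffine W x i)) := rfl

theorem nnAffine_eq_mulVec_add {N : ℕ → ℕ} {ℓ : ℕ} (W : NNLayer N ℓ) (x : Fin (N ℓ) → ℝ) :
    nnAffine W x = W.1 *ᵥ x + W.2 := rfl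

theorem LipschitzWith.pi_comp {ι : Type*} [Fintype ι] {K : ℝ≥0} {ρ : ℝ → ℝ}
    (hρ : LipschitzWith K ρ) : LipschitzWith K (fun (y : ι → ℝ) i => ρ (y i)) :=
  LipschitzWith.of_dist_le_mul fun x y => (dist_pi_le_iff (by positivity)).2 fun i =>
    (hρ.dist_le_mul _ _).trans (by gcongr; exact dist_le_pi_dist x y i)

theorem lipschitzWith_nnAffine {N : ℕ → ℕ} {ℓ : ℕ} (W : NNLayer N ℓ) :
    LipschitzWith (N ℓ * ‖W.1‖₊) (nnAffine W) := by
  refine LipschitzWith.of_dist_le_mul fun x y => (dist_pi_le_iff (by positivity)).2 fun i => ?_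
  calc dist (nnAffine W x i) (nnAffine W y i) = ‖∑ j, W.1 i j * (x j - y j)‖ := by
        simp [nnAffine, dist_eq_norm, mul_sub, Finset.sum_sub_distrib]
    _ ≤ ∑ j, ‖W.1 i j‖ * ‖x j - y j‖ := norm_sum_le_of_le _ fun j _ => norm_mul_le _ _
    _ ≤ ∑ _j : Fin (N ℓ), ‖W.1‖ * dist x y := Finset.sum_le_sum fun j _ =>
        mul_le_mul ((norm_le_pi_norm _ j).trans (norm_le_pi_norm W.1 i))
          (dist_le_pi_dist x y j) (norm_nonneg _) (norm_nonneg _)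
    _ = _ := by simp [mul_assoc]

theorem norm_weights_le {L : ℕ} {N : ℕ → ℕ} (Φ : NNParams L N) (ℓ : Fin L) : ‖(Φ ℓ).1‖ ≤ ‖Φ‖ :=
  (norm_fst_le _).trans (norm_le_pi_norm Φ ℓ)

theorem exists_lipschitzWith_nnHidden {ρ : ℝ → ℝ} {Kρ : ℝ≥0} (hρ : LipschitzWith Kρ ρ)
    (L : ℕ) (N : ℕ → ℕ) (C : ℝ≥0) :
    ∃ K, ∀ Φ : NNParams L N, ‖Φ‖ ≤ C → LipschitzWith K (nnHidden ρ L N Φ) := by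
  induction L generalizing N with
  | zero => exact ⟨1, fun _ _ => LipschitzWith.id⟩
  | succ L ih =>
    obtain ⟨K, hK⟩ := ih (fun k => N (k + 1))
    refine ⟨K * (Kρ * (N 0 * C)), fun Φ hΦ => ?_⟩
    have hW : ‖(Φ ⟨0, L.succ_pos⟩).1‖₊ ≤ C := (norm_weights_le Φ _).trans hΦ
    have hΨ : ‖(fun ℓ : Fin L => Φ ℓ.succ : NNParams L (fun k => N (k + 1)))‖ ≤ C :=
      ((pi_norm_le_iff_of_nonneg (norm_nonneg Φ)).2 fun ℓ => norm_le_pi_norm Φ _).trans hΦ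
    exact (hK _ hΨ).comp (hρ.pi_comp.comp ((lipschitzWith_nnAffine _).weaken (by gcongr)))

theorem exists_lipschitzWith_nnRealization {ρ : ℝ → ℝ} {Kρ : ℝ≥0} (hρ : LipschitzWith Kρ ρ)
    (L : ℕ) (N : ℕ → ℕ) (C : ℝ≥0) :
    ∃ K, ∀ Φ : NNParams L N, ‖Φ‖ ≤ C → LipschitzWith K (nnRealization ρ L N Φ) := by
  cases L with
  | zero => exact ⟨1, fun _ _ => LipschitzWith.id⟩
  | succ L =>
    obtain ⟨K, hK⟩ := exists_lipschitzWith_nnHidden hρ L N C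
    refine ⟨N L * C * K, fun Φ hΦ => ?_⟩
    have hW : ‖(Φ ⟨L, L.lt_succ_self⟩).1‖₊ ≤ C := (norm_weights_le Φ _).trans hΦ
    exact ((lipschitzWith_nnAffine _).weaken (by gcongr)).comp (hK _
      (((pi_norm_le_iff_of_nonneg (norm_nonneg Φ)).2 fun ℓ => norm_le_pi_norm Φ _).trans hΦ))

@[fun_prop]
theorem Continuous.nnAffine {X : Type*} [TopologicalSpace X] {N : ℕ → ℕ} {ℓ : ℕ}
    {W : X → NNLayer N ℓ} {x : X → Fin (N ℓ) → ℝ} (hW : Continuous W) (hx : Continuous x) :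
    Continuous fun p => nnAffine (W p) (x p) := by
  unfold _root_.nnAffine
  fun_prop

theorem continuous_nnHidden {ρ : ℝ → ℝ} (hρ : Continuous ρ) (L : ℕ) (N : ℕ → ℕ) :
    Continuous fun P : NNParams L N × (Fin (N 0) → ℝ) => nnHidden ρ L N P.1 P.2 := by
  induction L generalizing N with
  | zero => exact continuous_snd
  | succ L ih =>
    exact (ih (fun k => N (k + 1))).comp (.prodMk (by fun_prop) (by fun_prop))

theorem continuous_nnRealization {ρ : ℝ → ℝ} (hρ : Continuous ρ) (L : ℕ) (N : ℕ → ℕ) :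
    Continuous fun P : NNParams L N × (Fin (N 0) → ℝ) => nnRealization ρ L N P.1 P.2 := by
  cases L with
  | zero => exact continuous_snd
  | succ L =>
    have := continuous_nnHidden hρ L N
    simp only [nnRealization]
    fun_prop

theorem exists_nnRealization_eq_mul_comp_dotProduct {ρ : ℝ → ℝ} (hρ : Continuous ρ) {u v : ℝ}
    (huv : ρ u ≠ ρ v) (m : ℕ) (N : ℕ → ℕ) (hN : ∀ k < m, 0 < N (k + 1))
    (a : Fin (N 0) → ℝ) {s t : ℝ} (hst : s ≠ t) :
    ∃ Ψ : ℝ → ℝ, Continuous Ψ ∧ Ψ s ≠ Ψ t ∧ ∀ ε : ℝ, ∃ Θ : NNParams (m + 1) N,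
      ∀ y i, nnRealization ρ (m + 1) N Θ y i = ε * Ψ (a ⬝ᵥ y) := by
  induction m generalizing N a s t with
  | zero =>
    refine ⟨id, continuous_id, hst, fun ε => ⟨Fin.cons ((fun _ => ε • a, 0) : NNLayer N 0)
      (fun ℓ => ℓ.elim0), fun y i => ?_⟩⟩
    simp [nnRealization, nnHidden, nnAffine_eq_mulVec_add, mulVec, dotProduct, Finset.mul_sum,
      mul_assoc]
  | succ m ih =>
    obtain ⟨w, b, hs, ht⟩ : ∃ w b : ℝ, w * s + b = u ∧ w * t + b = v :=
      ⟨(u - v) / (s - t), u - (u - v) / (s - t) * s, by ring, by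
        field_simp [sub_ne_zero.2 hst]; ring⟩
    have h0 : 0 < N 1 := hN 0 m.succ_pos
    obtain ⟨Ψ, hΨc, hΨ, hΘ⟩ := ih (fun k => N (k + 1)) (fun k hk => hN (k + 1) (by omega))
      (Pi.single ⟨0, h0⟩ 1) huv
    refine ⟨fun r => Ψ (ρ (w * r + b)), by fun_prop, by simpa [hs, ht], fun ε => ?_⟩
    obtain ⟨Θ, hΘ⟩ := hΘ ε
    refine ⟨Fin.cons ((fun _ => w • a, fun _ => b) : NNLayer N 0) Θ, fun y i => ?_⟩
    rw [nnRealization_consNet, hΘ, single_dotProduct, one_mul]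
    simp [nnAffine_eq_mulVec_add, mulVec, dotProduct, Finset.mul_sum, mul_assoc]

theorem exists_sub_ne_sub_of_not_affine {ρ : ℝ → ℝ} (hρ : Continuous ρ)
    (haff : ¬ ∃ s t : ℝ, ∀ x : ℝ, ρ x = s * x + t) :
    ∃ δ p q : ℝ, ρ (p + δ) - ρ p ≠ ρ (q + δ) - ρ q := by
  by_contra! h
  let f : ℝ →+ ℝ := AddMonoidHom.mk' (fun x => ρ x - ρ 0) fun x y => by
    have := h y x 0
    simp only [zero_add] at this
    linarith
  refine haff ⟨ρ 1 - ρ 0, ρ 0, fun x => ?_⟩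
  have := map_real_smul f (hρ.sub continuous_const) x 1
  simp [f] at this
  linarith

theorem exists_ridge_nnRealization {ρ : ℝ → ℝ} {Kρ : ℝ≥0} (hρ : LipschitzWith Kρ ρ)
    (haff : ¬ ∃ s t : ℝ, ∀ x : ℝ, ρ x = s * x + t) (m : ℕ) (N : ℕ → ℕ) (hN1 : 2 ≤ N 1)
    (hN : ∀ k < m, 0 < N (k + 2)) (j₀ : Fin (N 0)) :
    ∃ h : ℝ → ℝ, (∃ B, ∀ r, |h r| ≤ B) ∧ (∃ p q, h p ≠ h q) ∧
      ∀ ε K b : ℝ, ∃ Φ : NNParams (m + 2) N,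
        ∀ x i, nnRealization ρ (m + 2) N Φ x i = ε * h (K * x j₀ + b) := by
  obtain ⟨δ, p, q, hpq⟩ := exists_sub_ne_sub_of_not_affine hρ.continuous haff
  obtain ⟨u, v, huv⟩ : ∃ u v, ρ u ≠ ρ v := by
    by_contra! h
    exact haff ⟨0, ρ 0, fun x => by simp [h x 0]⟩
  let i₀ : Fin (N 1) := ⟨0, by omega⟩
  let i₁ : Fin (N 1) := ⟨1, by omega⟩
  obtain ⟨Ψ, hΨc, hΨ, hΘ⟩ := exists_nnRealization_eq_mul_comp_dotProduct hρ.continuous huv m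
    (fun k => N (k + 1)) hN (Pi.single i₀ 1 - Pi.single i₁ 1) hpq
  have hg : ∀ r, ρ (r + δ) - ρ r ∈ Set.Icc (-(Kρ * |δ|)) (Kρ * |δ|) := fun r => by
    have := hρ.dist_le_mul (r + δ) r
    rw [Real.dist_eq, Real.dist_eq, add_sub_cancel_left] at this
    exact abs_le.1 this
  obtain ⟨B, hB⟩ := isCompact_Icc.exists_bound_of_continuousOn hΨc.continuousOn
  refine ⟨fun r => Ψ (ρ (r + δ) - ρ r), ⟨B, fun r => hB _ (hg r)⟩, ⟨p, q, hΨ⟩,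
    fun ε K b => ?_⟩
  obtain ⟨Θ, hΘ⟩ := hΘ ε
  refine ⟨Fin.cons ((fun _ => Pi.single j₀ K, fun i => if i = i₀ then b + δ else b) :
    NNLayer N 0) Θ, fun x i => ?_⟩
  have hi : i₁ ≠ i₀ := by simp [i₀, i₁, Fin.ext_iff]
  rw [nnRealization_consNet, hΘ]
  simp [nnAffine_eq_mulVec_add, mulVec, single_dotProduct, sub_dotProduct, hi, add_assoc]

theorem not_isQuotientMap_rangeFactorization_of_tendsto {X Y : Type*} [TopologicalSpace X]
    [TopologicalSpace Y] {F : X → Y} (y : ℕ → X) (x₀ : X)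
    (hlim : Tendsto (fun n => F (y n)) atTop (𝓝 (F x₀))) (hne : ∀ n, F (y n) ≠ F x₀)
    (hclosed : IsClosed {x | ∃ n, F x = F (y n)}) :
    ¬ IsQuotientMap (Set.rangeFactorization F) := by
  intro hq
  let M : Set (Set.range F) := {z | ∃ n, z.1 = F (y n)}
  have hM : IsClosed M := hq.isClosed_preimage.1 hclosed
  have hx₀ : (⟨F x₀, x₀, rfl⟩ : Set.range F) ∈ closure M :=
    mem_closure_of_tendsto (f := fun n => (⟨F (y n), y n, rfl⟩ : Set.range F))
      (tendsto_subtype_rng.2 hlim) (.of_forall fun n => ⟨n, rfl⟩)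
  obtain ⟨n, hn⟩ := hM.closure_subset hx₀
  exact hne n hn.symm

theorem isClosed_setOf_exists_eq_of_bddAbove {X α β : Type*} [TopologicalSpace X]
    [SequentialSpace X] [TopologicalSpace β] [T2Space β] {G : X → α → β}
    (hG : ∀ a, Continuous fun x => G x a) (y : ℕ → X)
    (hbdd : ∀ (u : ℕ → X) (n : ℕ → ℕ) (p : X), Tendsto u atTop (𝓝 p) →
      (∀ k, G (u k) = G (y (n k))) → BddAbove (Set.range n)) :
    IsClosed {x | ∃ n, G x = G (y n)} := by
  refine IsSeqClosed.isClosed fun u p hu hup => ?_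
  choose n hn using hu
  obtain ⟨B, hB⟩ := hbdd u n p hup hn
  obtain ⟨m, -, hm⟩ := (Set.finite_Iic B).frequently_exists (l := atTop)
    (p := fun i k => n k = i) |>.1 (.of_forall fun k => ⟨n k, hB ⟨k, rfl⟩, rfl⟩)
  exact ⟨m, funext fun a => tendsto_nhds_unique_of_frequently_eq ((hG a).tendsto p |>.comp hup)
    tendsto_const_nhds (hm.mono fun k hk => by simp [hn k, hk])⟩

theorem not_isQuotientMap_of_tendsto_of_lipschitz {P α : Type*} [SeminormedAddCommGroup P]
    [PseudoMetricSpace α] (F : P → α →ᵇ ℝ) (hcont : ∀ a, Continuous fun Φ => F Φ a)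
    (hlip : ∀ C : ℝ≥0, ∃ K, ∀ Φ, ‖Φ‖ ≤ C → LipschitzWith K (F Φ)) (y : ℕ → P) (y₀ : P)
    (hlim : Tendsto (fun n => F (y n)) atTop (𝓝 (F y₀))) (hne : ∀ n, F (y n) ≠ F y₀)
    (hsteep : ∀ K, BddAbove {n | LipschitzWith K (F (y n))}) :
    ¬ IsQuotientMap (Set.rangeFactorization F) := by
  refine not_isQuotientMap_rangeFactorization_of_tendsto y y₀ hlim hne ?_
  simp_rw [← DFunLike.coe_fn_eq]
  refine isClosed_setOf_exists_eq_of_bddAbove hcont y fun u n p hup hn => ?_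
  obtain ⟨C, hC⟩ := isBounded_iff_forall_norm_le.1 (Metric.isBounded_range_of_tendsto u hup)
  obtain ⟨K, hK⟩ := hlip C.toNNReal
  refine (hsteep K).mono (Set.range_subset_iff.2 fun k => ?_)
  change LipschitzWith K (F (y (n k)))
  rw [← DFunLike.coe_fn_eq.1 (hn k)]
  exact hK _ ((hC _ ⟨k, rfl⟩).trans (Real.le_coe_toNNReal C))

theorem bddAbove_setOf_lipschitzWith {α : Type*} [PseudoMetricSpace α] {f : ℕ → α → ℝ} {a : α}
    {b : ℕ → α} {c D : ℝ} (hc : 0 < c) (hsep : ∀ n, c / (n + 1) ≤ |f n (b n) - f n a|)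
    (hdist : ∀ n, dist (b n) a ≤ D / (n + 1) ^ 2) (K : ℝ≥0) :
    BddAbove {n | LipschitzWith K (f n)} := by
  refine ⟨⌊K * D / c⌋₊, fun n (hK : LipschitzWith K (f n)) => Nat.le_floor ?_⟩
  have h : c / (n + 1) ≤ K * (D / (n + 1) ^ 2) :=
    calc c / (n + 1) ≤ dist (f n (b n)) (f n a) := hsep n
      _ ≤ K * dist (b n) a := hK.dist_le_mul _ _
      _ ≤ K * (D / (n + 1) ^ 2) := by gcongr; exact hdist n
  rw [mul_div_assoc', div_le_div_iff₀ (by positivity) (by positivity)] at h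
  rw [le_div_iff₀ hc]
  nlinarith

theorem tendsto_zero_of_abs_le_div {α : Type*} [TopologicalSpace α] {g : ℕ → α →ᵇ ℝ} {B : ℝ}
    (hB : 0 ≤ B) (hg : ∀ n x, |g n x| ≤ B / (n + 1)) : Tendsto g atTop (𝓝 0) := by
  rw [tendsto_iff_norm_sub_tendsto_zero]
  simp only [sub_zero]
  exact squeeze_zero (fun _ => norm_nonneg _) (fun n => (norm_le (by positivity)).2 (hg n))
    (by simpa [Function.comp_def] using
      (tendsto_const_div_atTop_nhds_zero_nat B).comp (tendsto_add_atTop_nat 1))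

theorem exists_add_single_mem {d : ℕ} {Ω : Set (Fin d → ℝ)} (hint : (interior Ω).Nonempty)
    (j₀ : Fin d) : ∃ x₁ ∈ Ω, ∃ r > 0, ∀ t : ℝ, |t| < r → x₁ + Pi.single j₀ t ∈ Ω := by
  obtain ⟨x₁, hx₁⟩ := hint
  obtain ⟨r, hr, hball⟩ := Metric.isOpen_iff.1 isOpen_interior x₁ hx₁
  refine ⟨x₁, interior_subset hx₁, r, hr, fun t ht => interior_subset (hball ?_)⟩
  rwa [Metric.mem_ball, dist_eq_norm, add_sub_cancel_left, Pi.norm_single, Real.norm_eq_abs]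

theorem exists_steep_ridges {P : Type*} {d : ℕ} {Ω : Set (Fin d → ℝ)}
    (hint : (interior Ω).Nonempty) (F : P → Ω →ᵇ ℝ) {h : ℝ → ℝ} {B : ℝ} (hB : ∀ r, |h r| ≤ B)
    {p q : ℝ} (hpq : h p ≠ h q) (j₀ : Fin d)
    (hridge : ∀ ε K b : ℝ, ∃ Φ, ∀ x : Ω, F Φ x = ε * h (K * x.1 j₀ + b)) :
    ∃ (y : ℕ → P) (y₀ : P), Tendsto (fun n => F (y n)) atTop (𝓝 (F y₀)) ∧
      (∀ n, F (y n) ≠ F y₀) ∧ ∀ K, BddAbove {n | LipschitzWith K (F (y n))} := by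
  obtain ⟨x₁, hx₁, r, hr, hΩ⟩ := exists_add_single_mem hint j₀
  obtain ⟨κ, hκ⟩ := exists_gt (|q - p| / r)
  have hκ₀ : 0 < κ := (div_nonneg (abs_nonneg _) hr.le).trans_lt hκ
  let slope (n : ℕ) : ℝ := κ * (n + 1) ^ 2
  have hslope (n : ℕ) : κ ≤ slope n := le_mul_of_one_le_right hκ₀.le (one_le_pow₀ (by simp))
  have hdist (n : ℕ) : |(q - p) / slope n| ≤ |q - p| / κ / (n + 1) ^ 2 := by
    rw [abs_div, abs_of_pos (hκ₀.trans_le (hslope n)), div_div]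
  have hx₂ (n : ℕ) : x₁ + Pi.single j₀ ((q - p) / slope n) ∈ Ω := hΩ _ <| by
    refine (hdist n).trans_lt ((div_le_self (by positivity) (one_le_pow₀ (by simp))).trans_lt ?_)
    rwa [div_lt_iff₀ hκ₀, mul_comm, ← div_lt_iff₀ hr]
  choose y hy using fun n : ℕ => hridge (1 / (n + 1)) (slope n) (p - slope n * x₁ j₀)
  obtain ⟨y₀, hy₀⟩ := hridge 0 0 0
  have hFy₀ : F y₀ = 0 := by ext x; simp [hy₀]
  have hsep (n : ℕ) : F (y n) ⟨_, hx₂ n⟩ - F (y n) ⟨x₁, hx₁⟩ = (h q - h p) / (n + 1) := by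
    have hq : slope n * (x₁ j₀ + (q - p) / slope n) + (p - slope n * x₁ j₀) = q := by
      field_simp [(hκ₀.trans_le (hslope n)).ne']
      ring
    rw [hy, hy]
    simp only [Pi.add_apply, Pi.single_eq_same, hq, add_sub_cancel]
    ring
  refine ⟨y, y₀, hFy₀ ▸ tendsto_zero_of_abs_le_div ((abs_nonneg _).trans (hB 0)) fun n x => ?_,
    fun n hn => ?_, bddAbove_setOf_lipschitzWith (f := fun n => F (y n)) (a := ⟨x₁, hx₁⟩)
    (b := fun n => ⟨_, hx₂ n⟩) (D := |q - p| / κ) (abs_pos.2 (sub_ne_zero.2 hpq.symm))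
    (fun n => ?_) fun n => ?_⟩
  · rw [hy, abs_mul, abs_of_pos (by positivity), one_div_mul_eq_div]
    exact div_le_div_of_nonneg_right (hB _) (by positivity)
  · have := hsep n
    rw [hn, hFy₀] at this
    simp only [coe_zero, Pi.zero_apply, sub_self] at this
    rw [eq_comm, div_eq_zero_iff, sub_eq_zero] at this
    exact this.elim hpq.symm (Nat.cast_add_one_ne_zero n)
  · rw [hsep, abs_div, abs_of_pos (by positivity : (0 : ℝ) < n + 1)]
  · rw [Subtype.dist_eq, dist_eq_norm, add_sub_cancel_left, Pi.norm_single, Real.norm_eq_abs]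
    exact hdist n

theorem stmt10_general (L : ℕ) (hL : 2 ≤ L) (N : ℕ → ℕ) (hN : ∀ ℓ ≤ L, 0 < N ℓ) (hNL : N L = 1)
    (hN1 : 3 ≤ N 1)
    (Ω : Set (Fin (N 0) → ℝ)) (hint : (interior Ω).Nonempty)
    (ρ : ℝ → ℝ) (hρ : ∃ M : ℝ≥0, LipschitzWith M ρ)
    (haff : ¬ ∃ s t : ℝ, ∀ x : ℝ, ρ x = s * x + t)
    (F : NNParams L N → BoundedContinuousFunction Ω ℝ)
    (hF : ∀ (Φ : NNParams L N) (x : Ω), F Φ x = nnRealizationScalar ρ L N hNL Φ x.val) :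
    ¬ IsQuotientMap (Set.rangeFactorization F) := by
  obtain ⟨Kρ, hKρ⟩ := hρ
  obtain ⟨m, rfl⟩ : ∃ m, L = m + 2 := ⟨L - 2, by omega⟩
  obtain ⟨h, ⟨B, hB⟩, ⟨p, q, hpq⟩, hridge⟩ := exists_ridge_nnRealization hKρ haff m N
    (by omega) (fun k _ => hN (k + 2) (by omega)) ⟨0, hN 0 (by omega)⟩
  obtain ⟨y, y₀, hlim, hne, hsteep⟩ := exists_steep_ridges hint F hB hpq _ fun ε K b =>
    (hridge ε K b).imp fun Φ hΦ x => (hF Φ x).trans (hΦ _ _)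
  have hF' (Φ : NNParams (m + 2) N) :
      ⇑(F Φ) = (fun v => v ⟨0, by omega⟩) ∘ nnRealization ρ (m + 2) N Φ ∘ Subtype.val :=
    funext (hF Φ)
  refine not_isQuotientMap_of_tendsto_of_lipschitz F (fun x => ?_) (fun C => ?_) y y₀ hlim hne
    hsteep
  · simp_rw [hF']
    exact (continuous_apply _).comp
      ((continuous_nnRealization hKρ.continuous _ N).comp (.prodMk continuous_id continuous_const))
  · obtain ⟨K, hK⟩ := exists_lipschitzWith_nnRealization hKρ (m + 2) N C
    refine ⟨K, fun Φ hΦ => ?_⟩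
    simpa [hF'] using (LipschitzWith.eval _).comp ((hK Φ hΦ).comp (LipschitzWith.subtype_val Ω))

/-- Under the assumptions of the inverse-stability theorem, the realization
map (bundled as a map into the bounded continuous functions on `Ω`, with the sup-norm),
corestricted onto its range, is not a quotient map. -/
theorem stmt10 (L : ℕ) (hL : 2 ≤ L) (N : ℕ → ℕ) (hN : ∀ ℓ ≤ L, 0 < N ℓ) (hNL : N L = 1)
    (hN1 : 3 ≤ N 1)
    (Ω : Set (Fin (N 0) → ℝ)) (hbdd : Bornology.IsBounded Ω) (hint : (interior Ω).Nonempty)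
    (ρ : ℝ → ℝ) (hρ : ∃ M : ℝ≥0, LipschitzWith M ρ)
    (haff : ¬ ∃ s t : ℝ, ∀ x : ℝ, ρ x = s * x + t)
    (F : NNParams L N → BoundedContinuousFunction Ω ℝ)
    (hF : ∀ (Φ : NNParams L N) (x : Ω), F Φ x = nnRealizationScalar ρ L N hNL Φ x.val) :
    ¬ IsQuotientMap (Set.rangeFactorization F) :=
  stmt10_general L hL N hN hNL hN1 Ω hint ρ hρ haff F hF
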